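/- arXiv:1811.07699 — 4 statements merged into one kernel-verified Lean document; each statement's English description precedes it below -/
import Mathlib

section
/- For each i ∈ I, the quotient map π_i : 𝒢_i → 𝒢 = ⨆_{j∈I} 𝒢_j / ∼ is injective, continuous and open, and induces a homeomorphism of topological spaces from 𝒢_i onto the reduction 𝒢|_{U_i} = d^{-1}(U_i) ∩ r^{-1}(U_i) of the glued space. In particular the structural maps d, r, unit and inverse of 𝒢 are continuous and d, r : 𝒢 → X are open. -/
/-!
Statement 0: gluing of locally compact groupoids.  We model a (locally compact)
groupoid `𝒢 ⇉ U` over a set of units `U ⊆ X` by a type `A` of arrows together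
with (total) structural maps; multiplication is a total function whose value is
only relevant on composable pairs.  The gluing is the quotient of the disjoint
union `Σ i, A i` by the relation generated by `g ∼ φ_{ji} g`.
-/

universe u v

/-- An (algebraic) groupoid with arrow space `A` over the set of units `U ⊆ X`. -/
structure GroupoidOn (X : Type u) (A : Type v) (U : Set X) where
  d : A → X
  r : A → X
  unit : U → A
  inv : A → A
  mul : A → A → A
  d_mem : ∀ g, d g ∈ U
  r_mem : ∀ g, r g ∈ U
  d_unit : ∀ x : U, d (unit x) = x
  r_unit : ∀ x : U, r (unit x) = x
  d_inv : ∀ g, d (inv g) = r g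
  r_inv : ∀ g, r (inv g) = d g
  d_mul : ∀ g h, d g = r h → d (mul g h) = d h
  r_mul : ∀ g h, d g = r h → r (mul g h) = r g
  mul_assoc' : ∀ g h k, d g = r h → d h = r k → mul (mul g h) k = mul g (mul h k)
  unit_mul : ∀ g, mul (unit ⟨r g, r_mem g⟩) g = g
  mul_unit : ∀ g, mul g (unit ⟨d g, d_mem g⟩) = g
  mul_inv : ∀ g, mul g (inv g) = unit ⟨r g, r_mem g⟩
  inv_mul : ∀ g, mul (inv g) g = unit ⟨d g, d_mem g⟩

namespace GroupoidOn

variable {X : Type u} {A : Type v} {U : Set X}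

/-- The reduction set `𝒢|_V = d⁻¹(V) ∩ r⁻¹(V)` of a groupoid to `V ⊆ X`. -/
def res (G : GroupoidOn X A U) (V : Set X) : Set A :=
  {g | G.d g ∈ V ∧ G.r g ∈ V}

end GroupoidOn

/-- `G` is a topological groupoid: continuous structural maps, `d` surjective
(onto the units) and open. Together with local compactness of the arrow and unit
spaces this is the notion of a locally compact groupoid. -/
structure IsTopGroupoid {X : Type u} {A : Type v} {U : Set X}
    [TopologicalSpace X] [TopologicalSpace A] (G : GroupoidOn X A U) : Prop where
  continuous_d : Continuous G.d
  continuous_r : Continuous G.r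
  continuous_unit : Continuous G.unit
  continuous_inv : Continuous G.inv
  continuousOn_mul : ContinuousOn (fun p : A × A => G.mul p.1 p.2)
    {p : A × A | G.d p.1 = G.r p.2}
  d_surj : U ⊆ Set.range G.d
  isOpenMap_d : IsOpenMap G.d

/-- The data needed to glue a family of locally compact groupoids `𝒢_i ⇉ U_i`
over an open cover `(U_i)` of `X`, via compatible isomorphisms
`φ_{ij} : 𝒢_i|_{U_i ∩ U_j} → 𝒢_j|_{U_i ∩ U_j}` of topological groupoids. -/
structure GluingData (X : Type u) [TopologicalSpace X] (I : Type v)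
    (U : I → Set X) (A : I → Type u) [∀ i, TopologicalSpace (A i)] where
  G : ∀ i, GroupoidOn X (A i) (U i)
  top : ∀ i, IsTopGroupoid (G i)
  open_U : ∀ i, IsOpen (U i)
  cover : ∀ x : X, ∃ i, x ∈ U i
  φ : ∀ i j, A i → A j
  φ_mapsTo : ∀ i j, Set.MapsTo (φ i j) ((G i).res (U i ∩ U j)) ((G j).res (U i ∩ U j))
  φ_d : ∀ i j, ∀ g ∈ (G i).res (U i ∩ U j), (G j).d (φ i j g) = (G i).d g
  φ_r : ∀ i j, ∀ g ∈ (G i).res (U i ∩ U j), (G j).r (φ i j g) = (G i).r g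
  φ_unit : ∀ i j, ∀ (x : X) (hx : x ∈ U i ∩ U j),
    φ i j ((G i).unit ⟨x, hx.1⟩) = (G j).unit ⟨x, hx.2⟩
  φ_inv : ∀ i j, ∀ g ∈ (G i).res (U i ∩ U j), φ i j ((G i).inv g) = (G j).inv (φ i j g)
  φ_mul : ∀ i j, ∀ g h, g ∈ (G i).res (U i ∩ U j) → h ∈ (G i).res (U i ∩ U j) →
    (G i).d g = (G i).r h →
    φ i j ((G i).mul g h) = (G j).mul (φ i j g) (φ i j h)
  φ_id : ∀ i g, φ i i g = g
  φ_symm : ∀ i j, ∀ g ∈ (G i).res (U i ∩ U j), φ j i (φ i j g) = g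
  φ_trans : ∀ i j k, ∀ g ∈ (G i).res (U i ∩ U j ∩ U k), φ j k (φ i j g) = φ i k g
  φ_cont : ∀ i j, ContinuousOn (φ i j) ((G i).res (U i ∩ U j))

namespace GluingData

variable {X : Type u} [TopologicalSpace X] {I : Type v}
  {U : I → Set X} {A : I → Type u} [∀ i, TopologicalSpace (A i)]

/-- The relation `g ∼ φ_{ij} g` on the disjoint union of the arrow spaces. -/
def Rel (D : GluingData X I U A) : (Σ i, A i) → (Σ i, A i) → Prop :=
  fun p q => p.2 ∈ (D.G p.1).res (U p.1 ∩ U q.1) ∧ D.φ p.1 q.1 p.2 = q.2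

/-- The glued space `𝒢 = ⨆ᵢ 𝒢ᵢ / ∼`, with the quotient topology. -/
def Glued (D : GluingData X I U A) : Type max u v :=
  Quot D.Rel

instance (D : GluingData X I U A) : TopologicalSpace D.Glued :=
  inferInstanceAs (TopologicalSpace (Quot D.Rel))

/-- The canonical quotient map `π_i : 𝒢_i → 𝒢`. -/
def π (D : GluingData X I U A) (i : I) (g : A i) : D.Glued :=
  Quot.mk D.Rel ⟨i, g⟩

end GluingData

/-!
The generating relation `g ∼ φ_{ji} g` is already an equivalence relation, by the cocycle
conditions on the `φ_{ij}`. Hence `π_j g = π_i h` exactly when `g` lies over `U_i` and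
`φ_{ji} g = h`. This makes `π_i` injective with range `𝒢|_{U_i}`, and shows that the
preimage under `π_j` of an open set `π_i V` is `φ_{ji}⁻¹ V`, which is open; since `𝒢` carries
the quotient topology, `π_i` is open. The maps `d`, `r`, `inv` of `𝒢` are continuous and
`d`, `r` are open because they are so on every chart. Continuity of `unit` is checked on
the open cover `(U_i)`.
-/

namespace GroupoidOn

variable {X : Type u} {A : Type v} {U : Set X} (G : GroupoidOn X A U)

lemma unit_congr {x y : X} (hx : x ∈ U) (hy : y ∈ U) (h : x = y) :
    G.unit ⟨x, hx⟩ = G.unit ⟨y, hy⟩ := by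
  subst h; rfl

lemma inv_inv (g : A) : G.inv (G.inv g) = g :=
  calc G.inv (G.inv g)
      = G.mul (G.inv (G.inv g)) (G.unit ⟨G.d (G.inv (G.inv g)), G.d_mem _⟩) :=
        (G.mul_unit _).symm
    _ = G.mul (G.inv (G.inv g)) (G.mul (G.inv g) g) := by
        rw [G.inv_mul g]; congr 1; exact G.unit_congr _ _ (by rw [G.d_inv, G.r_inv])
    _ = G.mul (G.mul (G.inv (G.inv g)) (G.inv g)) g :=
        (G.mul_assoc' _ _ _ (G.d_inv _) (G.d_inv g)).symm
    _ = G.mul (G.unit ⟨G.r g, G.r_mem g⟩) g := by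
        rw [G.inv_mul (G.inv g)]; congr 1; exact G.unit_congr _ _ (G.d_inv g)
    _ = g := G.unit_mul g

lemma inv_involutive : Function.Involutive G.inv :=
  G.inv_inv

lemma inv_mem_res {V : Set X} {g : A} (hg : g ∈ G.res V) : G.inv g ∈ G.res V :=
  ⟨(G.d_inv g).symm ▸ hg.2, (G.r_inv g).symm ▸ hg.1⟩

lemma mem_res_inter_iff {V : Set X} {g : A} :
    g ∈ G.res (U ∩ V) ↔ G.d g ∈ V ∧ G.r g ∈ V :=
  ⟨fun h => ⟨h.1.2, h.2.2⟩, fun h => ⟨⟨G.d_mem g, h.1⟩, ⟨G.r_mem g, h.2⟩⟩⟩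

end GroupoidOn

namespace IsTopGroupoid

variable {X : Type u} {A : Type v} {U : Set X} [TopologicalSpace X] [TopologicalSpace A]
  {G : GroupoidOn X A U}

lemma isOpen_res (hG : IsTopGroupoid G) {V : Set X} (hV : IsOpen V) : IsOpen (G.res V) :=
  (hV.preimage hG.continuous_d).inter (hV.preimage hG.continuous_r)

lemma isOpenMap_inv (hG : IsTopGroupoid G) : IsOpenMap G.inv := fun V hV => by
  rw [G.inv_involutive.image_eq_preimage_symm]
  exact hV.preimage hG.continuous_inv

lemma isOpenMap_r (hG : IsTopGroupoid G) : IsOpenMap G.r := by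
  have hr : G.r = G.d ∘ G.inv := funext fun g => (G.d_inv g).symm
  rw [hr]
  exact hG.isOpenMap_d.comp hG.isOpenMap_inv

end IsTopGroupoid

namespace GluingData

variable {X : Type u} [TopologicalSpace X] {I : Type v}
  {U : I → Set X} {A : I → Type u} [∀ i, TopologicalSpace (A i)]
  (D : GluingData X I U A)

lemma Rel.d_eq {p q : Σ i, A i} (h : D.Rel p q) : (D.G q.1).d q.2 = (D.G p.1).d p.2 := by
  rw [← h.2, D.φ_d _ _ _ h.1]

lemma Rel.r_eq {p q : Σ i, A i} (h : D.Rel p q) : (D.G q.1).r q.2 = (D.G p.1).r p.2 := by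
  rw [← h.2, D.φ_r _ _ _ h.1]

lemma rel_equivalence : Equivalence D.Rel where
  refl p := ⟨⟨⟨(D.G p.1).d_mem p.2, (D.G p.1).d_mem p.2⟩,
    ⟨(D.G p.1).r_mem p.2, (D.G p.1).r_mem p.2⟩⟩, D.φ_id _ _⟩
  symm {p q} h := by
    refine ⟨?_, ?_⟩
    · rw [← h.2, Set.inter_comm]; exact D.φ_mapsTo _ _ h.1
    · rw [← h.2]; exact D.φ_symm _ _ _ h.1
  trans {p q s} hpq hqs := by
    have hd : (D.G p.1).d p.2 ∈ U s.1 := hpq.d_eq ▸ hqs.1.1.2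
    have hr : (D.G p.1).r p.2 ∈ U s.1 := hpq.r_eq ▸ hqs.1.2.2
    refine ⟨⟨⟨(D.G p.1).d_mem p.2, hd⟩, ⟨(D.G p.1).r_mem p.2, hr⟩⟩, ?_⟩
    rw [← hqs.2, ← hpq.2, D.φ_trans _ _ _ _ ⟨⟨hpq.1.1, hd⟩, ⟨hpq.1.2, hr⟩⟩]

lemma π_eq_π_iff {i j : I} {g : A j} {h : A i} :
    D.π j g = D.π i h ↔ D.Rel ⟨j, g⟩ ⟨i, h⟩ :=
  ⟨fun e => D.rel_equivalence.eqvGen_iff.mp (Quot.eqvGen_exact e), Quot.sound⟩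

lemma π_eq_π_φ {i j : I} {g : A j} (hg : g ∈ (D.G j).res (U j ∩ U i)) :
    D.π j g = D.π i (D.φ j i g) :=
  D.π_eq_π_iff.mpr ⟨hg, rfl⟩

lemma π_injective (i : I) : Function.Injective (D.π i) := fun g h e => by
  rw [← D.φ_id i g]
  exact (D.π_eq_π_iff.mp e).2

lemma continuous_π (i : I) : Continuous (D.π i) :=
  continuous_quot_mk.comp continuous_sigmaMk

lemma preimage_π_image_π (i j : I) (V : Set (A i)) :
    D.π j ⁻¹' (D.π i '' V) = (D.G j).res (U j ∩ U i) ∩ D.φ j i ⁻¹' V := by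
  ext g
  constructor
  · rintro ⟨h, hV, e⟩
    obtain ⟨hg, hφ⟩ := D.π_eq_π_iff.mp e.symm
    exact ⟨hg, show D.φ j i g ∈ V from hφ ▸ hV⟩
  · rintro ⟨hg, hV⟩
    exact ⟨_, hV, (D.π_eq_π_φ hg).symm⟩

lemma isOpenMap_π (i : I) : IsOpenMap (D.π i) := fun V hV => by
  refine (isQuotientMap_quot_mk (r := D.Rel)).isOpen_preimage.mp (isOpen_sigma_iff.mpr fun j => ?_)
  change IsOpen (D.π j ⁻¹' (D.π i '' V))
  rw [preimage_π_image_π]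
  exact (D.φ_cont j i).isOpen_inter_preimage
    ((D.top j).isOpen_res ((D.open_U j).inter (D.open_U i))) hV

def d : D.Glued → X :=
  Quot.lift (fun p => (D.G p.1).d p.2) fun _ _ h => h.d_eq.symm

def r : D.Glued → X :=
  Quot.lift (fun p => (D.G p.1).r p.2) fun _ _ h => h.r_eq.symm

def inv : D.Glued → D.Glued :=
  Quot.lift (fun p => D.π p.1 ((D.G p.1).inv p.2)) fun p q h =>
    D.π_eq_π_iff.mpr ⟨(D.G p.1).inv_mem_res h.1, by rw [D.φ_inv _ _ _ h.1, h.2]⟩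

noncomputable def unit (x : X) : D.Glued :=
  D.π (D.cover x).choose ((D.G (D.cover x).choose).unit ⟨x, (D.cover x).choose_spec⟩)

lemma d_π (i : I) (g : A i) : D.d (D.π i g) = (D.G i).d g := rfl

lemma r_π (i : I) (g : A i) : D.r (D.π i g) = (D.G i).r g := rfl

lemma inv_π (i : I) (g : A i) : D.inv (D.π i g) = D.π i ((D.G i).inv g) := rfl

lemma unit_eq_π (i : I) (x : X) (hx : x ∈ U i) :
    D.unit x = D.π i ((D.G i).unit ⟨x, hx⟩) := by
  refine D.π_eq_π_iff.mpr ⟨(D.G _).mem_res_inter_iff.mpr ⟨?_, ?_⟩, D.φ_unit _ _ x ⟨(D.cover x).choose_spec, hx⟩⟩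
  · rw [GroupoidOn.d_unit]; exact hx
  · rw [GroupoidOn.r_unit]; exact hx

lemma range_π (i : I) : Set.range (D.π i) = {γ | D.d γ ∈ U i ∧ D.r γ ∈ U i} := by
  ext γ
  constructor
  · rintro ⟨g, rfl⟩
    exact ⟨(D.G i).d_mem g, (D.G i).r_mem g⟩
  · obtain ⟨⟨j, g⟩, rfl⟩ := Quot.exists_rep γ
    intro hg
    exact ⟨_, (D.π_eq_π_φ ((D.G j).mem_res_inter_iff.mpr hg)).symm⟩

lemma continuous_d : Continuous D.d :=
  continuous_quot_lift _ (continuous_sigma fun j => (D.top j).continuous_d)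

lemma continuous_r : Continuous D.r :=
  continuous_quot_lift _ (continuous_sigma fun j => (D.top j).continuous_r)

lemma continuous_inv : Continuous D.inv :=
  continuous_quot_lift _ (continuous_sigma fun j =>
    (D.continuous_π j).comp (D.top j).continuous_inv)

lemma isOpenMap_d : IsOpenMap D.d :=
  IsOpenMap.of_comp continuous_quot_mk Quot.mk_surjective
    (isOpenMap_sigma.mpr fun j => (D.top j).isOpenMap_d)

lemma isOpenMap_r : IsOpenMap D.r :=
  IsOpenMap.of_comp continuous_quot_mk Quot.mk_surjective
    (isOpenMap_sigma.mpr fun j => (D.top j).isOpenMap_r)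

lemma continuous_unit : Continuous D.unit := by
  refine continuous_of_cover_nhds (fun x => ⟨_, (D.open_U _).mem_nhds (D.cover x).choose_spec⟩)
    fun i => ?_
  rw [continuousOn_iff_continuous_domRestrict]
  have hunit : (U i).domRestrict D.unit = D.π i ∘ (D.G i).unit :=
    funext fun x => D.unit_eq_π i x x.2
  rw [hunit]
  exact (D.continuous_π i).comp (D.top i).continuous_unit

end GluingData

theorem statement_0_general
    {X : Type u} [TopologicalSpace X]
    {I : Type v} {U : I → Set X} {A : I → Type u} [∀ i, TopologicalSpace (A i)]
    (D : GluingData X I U A) :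
    ∃ (dd rr : D.Glued → X) (uu : X → D.Glued) (ii : D.Glued → D.Glued),
      -- the structural maps are induced by those of the `𝒢_i`:
      (∀ i g, dd (D.π i g) = (D.G i).d g) ∧
      (∀ i g, rr (D.π i g) = (D.G i).r g) ∧
      (∀ (i) (x : X) (hx : x ∈ U i), uu x = D.π i ((D.G i).unit ⟨x, hx⟩)) ∧
      (∀ i g, ii (D.π i g) = D.π i ((D.G i).inv g)) ∧
      -- each `π_i` is injective, continuous, open, and a homeomorphism onto
      -- the reduction `𝒢|_{U_i}`:
      (∀ i, Function.Injective (D.π i)) ∧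
      (∀ i, Continuous (D.π i)) ∧
      (∀ i, IsOpenMap (D.π i)) ∧
      (∀ i, Set.range (D.π i) = {γ : D.Glued | dd γ ∈ U i ∧ rr γ ∈ U i}) ∧
      -- the structural maps are continuous and `d`, `r` are open:
      Continuous dd ∧ Continuous rr ∧ IsOpenMap dd ∧ IsOpenMap rr ∧
      Continuous uu ∧ Continuous ii :=
  ⟨D.d, D.r, D.unit, D.inv, D.d_π, D.r_π, D.unit_eq_π, D.inv_π,
    D.π_injective, D.continuous_π, D.isOpenMap_π, D.range_π,
    D.continuous_d, D.continuous_r, D.isOpenMap_d, D.isOpenMap_r,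
    D.continuous_unit, D.continuous_inv⟩

/-- For each `i ∈ I`, the quotient map `π_i : 𝒢_i → 𝒢` is
injective, continuous and open, and induces a homeomorphism from `𝒢_i` onto
the reduction `𝒢|_{U_i} = d⁻¹(U_i) ∩ r⁻¹(U_i)` of the glued space (i.e. it is,
moreover, a bijection onto that reduction).  In particular the induced
structural maps `d`, `r`, `unit`, `inv` of `𝒢` are well defined and continuous,
and `d, r : 𝒢 → X` are open. -/
theorem statement_0
    {X : Type u} [TopologicalSpace X] [LocallyCompactSpace X] [T2Space X]
    {I : Type v} {U : I → Set X} {A : I → Type u} [∀ i, TopologicalSpace (A i)]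
    [∀ i, LocallyCompactSpace (A i)]
    (D : GluingData X I U A) :
    ∃ (dd rr : D.Glued → X) (uu : X → D.Glued) (ii : D.Glued → D.Glued),
      -- the structural maps are induced by those of the `𝒢_i`:
      (∀ i g, dd (D.π i g) = (D.G i).d g) ∧
      (∀ i g, rr (D.π i g) = (D.G i).r g) ∧
      (∀ (i) (x : X) (hx : x ∈ U i), uu x = D.π i ((D.G i).unit ⟨x, hx⟩)) ∧
      (∀ i g, ii (D.π i g) = D.π i ((D.G i).inv g)) ∧
      -- each `π_i` is injective, continuous, open, and a homeomorphism onto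
      -- the reduction `𝒢|_{U_i}`:
      (∀ i, Function.Injective (D.π i)) ∧
      (∀ i, Continuous (D.π i)) ∧
      (∀ i, IsOpenMap (D.π i)) ∧
      (∀ i, Set.range (D.π i) = {γ : D.Glued | dd γ ∈ U i ∧ rr γ ∈ U i}) ∧
      -- the structural maps are continuous and `d`, `r` are open:
      Continuous dd ∧ Continuous rr ∧ IsOpenMap dd ∧ IsOpenMap rr ∧
      Continuous uu ∧ Continuous ii :=
  statement_0_general D
end

section
/- Let (𝒢_i)_{i∈I} be a family of locally compact groupoids over an open cover (U_i)_{i∈I} of X, with compatible gluing isomorphisms. If the family satisfies the strong gluing condition, then it satisfies the weak gluing condition. -/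
/-!
Statement 0: gluing of locally compact groupoids.  We model a (locally compact)
groupoid `𝒢 ⇉ U` over a set of units `U ⊆ X` by a type `A` of arrows together
with (total) structural maps; multiplication is a total function whose value is
only relevant on composable pairs.  The gluing is the quotient of the disjoint
union `Σ i, A i` by the relation generated by `g ∼ φ_{ji} g`.
-/

universe u v

namespace GluingData

variable {X : Type u} [TopologicalSpace X] {I : Type v}
  {U : I → Set X} {A : I → Type u} [∀ i, TopologicalSpace (A i)]

/-- The **weak gluing condition**: every composable pair of arrows of the glued
space has both members represented in a single `𝒢_i`. -/
def WeakGluing (D : GluingData X I U A) : Prop :=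
  ∀ p q : Σ i, A i, (D.G p.1).d p.2 = (D.G q.1).r q.2 →
    ∃ (k : I) (g h : A k),
      D.π k g = Quot.mk D.Rel p ∧ D.π k h = Quot.mk D.Rel q

/-- The orbit `𝒢_i · x = r_i(d_i⁻¹(x))` of a point `x ∈ X` under `𝒢_i`
(empty unless `x ∈ U_i`). -/
def orbit (D : GluingData X I U A) (i : I) (x : X) : Set X :=
  {y | ∃ g : A i, (D.G i).d g = x ∧ (D.G i).r g = y}

/-- The **strong gluing condition**: for each `x ∈ X` there is `i_x ∈ I` such
that the orbit of `x` under any member of the family is contained in `U_{i_x}`. -/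
def StrongGluing (D : GluingData X I U A) : Prop :=
  ∀ x : X, ∃ k : I, ∀ i : I, D.orbit i x ⊆ U k

end GluingData

/-- A family of locally compact groupoids (over an open cover
of `X`, with compatible gluing isomorphisms) satisfying the strong gluing
condition also satisfies the weak gluing condition. -/
theorem statement_3
    {X : Type u} [TopologicalSpace X] [LocallyCompactSpace X] [T2Space X]
    {I : Type v} {U : I → Set X} {A : I → Type u} [∀ i, TopologicalSpace (A i)]
    [∀ i, LocallyCompactSpace (A i)]
    (D : GluingData X I U A) (hs : D.StrongGluing) :
    D.WeakGluing := by
  intro p q hdr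
  obtain ⟨i, g⟩ := p
  obtain ⟨j, h⟩ := q
  simp only at hdr
  set x := (D.G i).d g with hx
  obtain ⟨k, hk⟩ := hs x
  -- x ∈ U k via the unit arrow of 𝒢 i at x
  have hxU : x ∈ U k := hk i ⟨(D.G i).unit ⟨x, (D.G i).d_mem g⟩,
    (D.G i).d_unit _, (D.G i).r_unit _⟩
  have hrg : (D.G i).r g ∈ U k := hk i ⟨g, rfl, rfl⟩
  have hdh : (D.G j).d h ∈ U k := hk j ⟨(D.G j).inv h, by
    rw [(D.G j).d_inv]; exact hdr.symm, (D.G j).r_inv h⟩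
  have hgres : g ∈ (D.G i).res (U i ∩ U k) :=
    ⟨⟨(D.G i).d_mem g, hxU⟩, ⟨(D.G i).r_mem g, hrg⟩⟩
  have hhres : h ∈ (D.G j).res (U j ∩ U k) :=
    ⟨⟨(D.G j).d_mem h, hdh⟩, ⟨(D.G j).r_mem h, hdr ▸ hxU⟩⟩
  refine ⟨k, D.φ i k g, D.φ j k h, ?_, ?_⟩
  · exact (Quot.sound ⟨hgres, rfl⟩).symm
  · exact (Quot.sound ⟨hhres, rfl⟩).symm
end

section
/- Every boundary action groupoid is Hausdorff (its space of morphisms is a Hausdorff topological space). -/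
/-!
We model a (locally compact / Lie) groupoid `𝒢 ⇉ U` over a set of units
`U ⊆ X` by a type `A` of arrows together with (total) structural maps;
multiplication is a total function whose value is only relevant on composable
pairs.  Smoothness is modelled at the topological level.
-/

universe u v

namespace GroupoidOn

variable {X : Type u} {A : Type v} {U : Set X}

/-- A subset `S` of the units is invariant if the range of any arrow whose
domain lies in `S` also lies in `S`. -/
def IsInvariant (G : GroupoidOn X A U) (S : Set X) : Prop :=
  ∀ g, G.d g ∈ S → G.r g ∈ S

end GroupoidOn

/-- The pair groupoid of a subset `S ⊆ X`. -/
def pairGroupoid {X : Type u} (S : Set X) : GroupoidOn X (S × S) S where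
  d p := p.2
  r p := p.1
  unit x := (x, x)
  inv p := (p.2, p.1)
  mul p q := (p.1, q.2)
  d_mem p := p.2.2
  r_mem p := p.1.2
  d_unit _ := rfl
  r_unit _ := rfl
  d_inv _ := rfl
  r_inv _ := rfl
  d_mul _ _ _ := rfl
  r_mul _ _ _ := rfl
  mul_assoc' _ _ _ _ _ := rfl
  unit_mul g := by ext <;> rfl
  mul_unit g := by ext <;> rfl
  mul_inv g := by ext <;> rfl
  inv_mul g := by ext <;> rfl

/-- A continuous right action of a (topological) group `Γ` on a space `Y`.
(In our applications this models a *smooth* action of a Lie group on a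
manifold; smoothness is modelled at the topological level.) -/
structure ContRightAction (Γ : Type*) (Y : Type*) [Group Γ] [TopologicalSpace Γ]
    [TopologicalSpace Y] where
  act : Y → Γ → Y
  act_one : ∀ y, act y 1 = y
  act_mul : ∀ y g h, act y (g * h) = act (act y g) h
  continuous_act : Continuous fun p : Y × Γ => act p.1 p.2

/-- The action groupoid `Y ⋊ Γ` of a continuous right action: arrows `Y × Γ`,
`r (y, g) = y`, `d (y, g) = y · g⁻¹`, and `(y, h)(y·h⁻¹, g) = (y, gh)`. -/
def actionGroupoid {Γ : Type*} {Y : Type*} [Group Γ] [TopologicalSpace Γ]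
    [TopologicalSpace Y] (ρ : ContRightAction Γ Y) :
    GroupoidOn Y (Y × Γ) Set.univ where
  d p := ρ.act p.1 p.2⁻¹
  r p := p.1
  unit y := (y.1, 1)
  inv p := (ρ.act p.1 p.2⁻¹, p.2⁻¹)
  mul p q := (p.1, q.2 * p.2)
  d_mem _ := trivial
  r_mem _ := trivial
  d_unit y := by simp [ρ.act_one]
  r_unit y := rfl
  d_inv p := by
    show ρ.act (ρ.act p.1 p.2⁻¹) (p.2⁻¹)⁻¹ = p.1
    rw [← ρ.act_mul]; simp [ρ.act_one]
  r_inv p := rfl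
  d_mul p q h := by
    show ρ.act p.1 (q.2 * p.2)⁻¹ = ρ.act q.1 q.2⁻¹
    rw [mul_inv_rev, ρ.act_mul]
    exact congrArg (fun z => ρ.act z q.2⁻¹) h
  r_mul _ _ _ := rfl
  mul_assoc' p q k _ _ := by simp [mul_assoc]
  unit_mul g := by simp
  mul_unit g := by simp
  mul_inv g := by simp
  inv_mul g := by simp

/-- `AreRedIso G V H W` : the reductions `G|_V` and `H|_W` are isomorphic as
topological groupoids, via a homeomorphism of the unit sets `V ≃ₜ W` and a
compatible homeomorphism of the arrow spaces preserving domain, range and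
multiplication. -/
def AreRedIso {X : Type*} [TopologicalSpace X] {A : Type*} [TopologicalSpace A]
    {S : Set X} (G : GroupoidOn X A S) (V : Set X)
    {Y : Type*} [TopologicalSpace Y] {B : Type*} [TopologicalSpace B]
    {T : Set Y} (H : GroupoidOn Y B T) (W : Set Y) : Prop :=
  ∃ (base : V ≃ₜ W) (e : {g : A // g ∈ G.res V} ≃ₜ {b : B // b ∈ H.res W}),
    (∀ g : {g : A // g ∈ G.res V}, H.d (e g).1 = (base ⟨G.d g.1, g.2.1⟩ : Y)) ∧
    (∀ g : {g : A // g ∈ G.res V}, H.r (e g).1 = (base ⟨G.r g.1, g.2.2⟩ : Y)) ∧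
    (∀ (g h : {g : A // g ∈ G.res V}) (hc : G.d g.1 = G.r h.1),
      (e ⟨G.mul g.1 h.1,
          ⟨by rw [G.d_mul _ _ hc]; exact h.2.1,
           by rw [G.r_mul _ _ hc]; exact g.2.2⟩⟩).1 = H.mul (e g).1 (e h).1)

/-- `OrbitData G U` : `U` is an open dense invariant subset of the unit set `S`
of `G` on which `G` is the pair groupoid (`𝒢_U ≅ U × U`); such a `U` is the
(unique) open dense orbit of a boundary action groupoid. -/
def OrbitData {X : Type u} [TopologicalSpace X] {A : Type v} [TopologicalSpace A]
    {S : Set X} (G : GroupoidOn X A S) (U : Set X) : Prop :=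
  U ⊆ S ∧ IsOpen U ∧ S ⊆ closure U ∧ G.IsInvariant U ∧
    AreRedIso G U (pairGroupoid U) U

/-- `𝒢 ⇉ S` is a **boundary action groupoid**: a (Lie) groupoid, with an open
dense invariant subset `U` of the units on which it is the pair groupoid,
covered by reductions of action groupoids of (Lie) group actions, the family of
these reductions satisfying the weak gluing condition.  (Smoothness is modelled
at the topological level.) -/
structure IsBoundaryActionGroupoid {X : Type u} [TopologicalSpace X] {A : Type u}
    [TopologicalSpace A] {S : Set X} (G : GroupoidOn X A S) : Prop where
  top : IsTopGroupoid G
  -- (1) an open dense invariant subset `U ⊆ S` with `𝒢_U ≅ U × U`: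
  orbit : ∃ U : Set X, OrbitData G U
  -- (2) + (3) an open cover of the unit space by sets over which `𝒢` is a
  -- reduction of an action groupoid, satisfying the weak gluing condition:
  cover : ∃ (ι : Type u) (V : ι → Set X),
    (∀ i, IsOpen (V i)) ∧ (∀ x ∈ S, ∃ i, x ∈ V i) ∧
    (∀ i, ∃ (Y : Type u) (tY : TopologicalSpace Y) (Γ : Type u) (gΓ : Group Γ)
      (tΓ : TopologicalSpace Γ) (_ : @IsTopologicalGroup Γ tΓ gΓ)
      (ρ : @ContRightAction Γ Y gΓ tΓ tY) (W : Set Y),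
      @IsOpen Y tY W ∧
      @AreRedIso X _ A _ S G (V i) Y tY (Y × Γ) (@instTopologicalSpaceProd Y Γ tY tΓ)
        Set.univ (@actionGroupoid Γ Y gΓ tΓ tY ρ) W) ∧
    (∀ g h : A, G.d g = G.r h → ∃ i, g ∈ G.res (V i) ∧ h ∈ G.res (V i))

/-!
Over the open dense orbit `U` the groupoid is the pair groupoid, so on the open dense set of
arrows `𝒢|_U` an arrow is determined by its domain and range, which lie in a Hausdorff space.
Hence no arrow of `𝒢|_U` is topologically indistinguishable from another arrow. Every
action-groupoid chart meets `𝒢|_U`; translating the group coordinate of an arrow of the chart by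
an element inseparable from `1` gives an inseparable arrow, so the structure group is T0, hence
Hausdorff, being a topological group. Two distinct arrows with the same domain and range lie in a
common chart by the weak gluing condition, where they differ only in their group coordinate and
are separated by it; all other pairs of arrows are separated by `(d, r)`.
-/

open Filter Topology

theorem Inseparable.eq_of_injOn {Z Y : Type*} [TopologicalSpace Z] [TopologicalSpace Y]
    [T2Space Y] {f : Z → Y} (hf : Continuous f) {s : Set Z} (hs : IsOpen s)
    (hinj : s.InjOn f) {a b : Z} (ha : a ∈ s) (hab : Inseparable a b) : a = b :=
  hinj ha ((hab.mem_open_iff hs).1 ha) (hab.map hf).eq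

theorem disjoint_nhds_of_map_ne {Z Y : Type*} [TopologicalSpace Z] [TopologicalSpace Y]
    [T2Space Y] {f : Z → Y} (hf : Continuous f) {x y : Z} (h : f x ≠ f y) :
    Disjoint (𝓝 x) (𝓝 y) :=
  (hf.tendsto x).disjoint (disjoint_nhds_nhds.2 h) (hf.tendsto y)

theorem IsOpen.disjoint_nhds_val {Z : Type*} [TopologicalSpace Z] {s : Set Z} (hs : IsOpen s)
    {x y : s} (h : Disjoint (𝓝 x) (𝓝 y)) : Disjoint (𝓝 (x : Z)) (𝓝 (y : Z)) := by
  rw [← hs.isOpenEmbedding_subtypeVal.map_nhds_eq, ← hs.isOpenEmbedding_subtypeVal.map_nhds_eq]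
  exact (disjoint_map Subtype.val_injective).2 h

theorem ContRightAction.continuous_actionGroupoid_d {Γ Y : Type*} [Group Γ] [TopologicalSpace Γ]
    [IsTopologicalGroup Γ] [TopologicalSpace Y] (ρ : ContRightAction Γ Y) :
    Continuous (actionGroupoid ρ).d :=
  ρ.continuous_act.comp (continuous_fst.prodMk continuous_snd.inv)

namespace GroupoidOn

variable {X A : Type*} [TopologicalSpace X] [TopologicalSpace A] {S : Set X}

theorem isOpen_res {G : GroupoidOn X A S} (hd : Continuous G.d) (hr : Continuous G.r)
    {V : Set X} (hV : IsOpen V) : IsOpen (G.res V) :=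
  (hV.preimage hd).inter (hV.preimage hr)

theorem dense_res {G : GroupoidOn X A S} (hG : IsTopGroupoid G) {U : Set X}
    (hU : S ⊆ closure U) (hinv : G.IsInvariant U) : Dense (G.res U) := by
  refine dense_iff_inter_open.2 fun O hO ⟨a, ha⟩ => ?_
  obtain ⟨_, ⟨b, hbO, rfl⟩, hbU⟩ :=
    mem_closure_iff.1 (hU (G.d_mem a)) _ (hG.isOpenMap_d O hO) ⟨a, ha, rfl⟩
  exact ⟨b, hbO, hbU, hinv b hbU⟩

theorem injOn_res_of_areRedIso_pairGroupoid {G : GroupoidOn X A S} {U : Set X}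
    (h : AreRedIso G U (pairGroupoid U) U) : (G.res U).InjOn fun a => (G.d a, G.r a) := by
  obtain ⟨base, e, hd, hr, -⟩ := h
  intro a ha b hb hab
  obtain ⟨hdab, hrab⟩ := Prod.mk.inj hab
  have hbase {x y : U} (hxy : (x : X) = y) : (base x : X) = base y :=
    congrArg (fun z => (base z : X)) (Subtype.ext hxy)
  have heq : e ⟨a, ha⟩ = e ⟨b, hb⟩ := Subtype.ext <| Prod.ext
    (Subtype.ext <| (hr ⟨a, ha⟩).trans <| (hbase hrab).trans (hr ⟨b, hb⟩).symm)
    (Subtype.ext <| (hd ⟨a, ha⟩).trans <| (hbase hdab).trans (hd ⟨b, hb⟩).symm)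
  exact congrArg Subtype.val (e.injective heq)

theorem t0Space_of_areRedIso_actionGroupoid {G : GroupoidOn X A S} {V : Set X}
    {Γ Y : Type*} [Group Γ] [TopologicalSpace Γ] [IsTopologicalGroup Γ] [TopologicalSpace Y]
    (ρ : ContRightAction Γ Y) {W : Set Y} (hW : IsOpen W)
    (hiso : AreRedIso G V (actionGroupoid ρ) W) {a : A} (ha : a ∈ G.res V)
    (hsep : ∀ b, Inseparable a b → a = b) : T0Space Γ := by
  obtain ⟨-, e, -⟩ := hiso
  set P := e ⟨a, ha⟩
  refine (t0Space_iff_inseparable Γ).2 fun γ₁ γ₂ hγ => ?_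
  let Q : Y × Γ := (P.1.1, P.1.2 * γ₁⁻¹ * γ₂)
  have hPQ : Inseparable P.1 Q := by
    refine (Inseparable.refl P.1.1).prod ?_
    simpa using hγ.map (continuous_const_mul (P.1.2 * γ₁⁻¹))
  have hQ : Q ∈ (actionGroupoid ρ).res W :=
    (hPQ.mem_open_iff (isOpen_res ρ.continuous_actionGroupoid_d continuous_fst hW)).1 P.2
  obtain ⟨b, hb⟩ := e.surjective ⟨Q, hQ⟩
  have hab : a = b := by
    refine hsep b <| (subtype_inseparable_iff ⟨a, ha⟩ b).1 <| e.isInducing.inseparable_iff.1 ?_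
    rw [hb]
    exact (subtype_inseparable_iff _ _).2 hPQ
  have hPQ_eq : P.1.2 = P.1.2 * γ₁⁻¹ * γ₂ :=
    congrArg (fun R => R.1.2) ((congrArg e (Subtype.ext hab)).trans hb)
  simpa [mul_assoc, inv_mul_eq_one] using hPQ_eq

theorem disjoint_nhds_of_areRedIso_actionGroupoid {G : GroupoidOn X A S} (hd : Continuous G.d)
    (hr : Continuous G.r) {V : Set X} (hV : IsOpen V)
    {Γ Y : Type*} [Group Γ] [TopologicalSpace Γ] [T2Space Γ] [TopologicalSpace Y]
    (ρ : ContRightAction Γ Y) {W : Set Y} (hiso : AreRedIso G V (actionGroupoid ρ) W) {g h : A}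
    (hg : g ∈ G.res V) (hh : h ∈ G.res V) (hrgh : G.r g = G.r h) (hne : g ≠ h) :
    Disjoint (𝓝 g) (𝓝 h) := by
  obtain ⟨base, e, -, he_r, -⟩ := hiso
  have hfst : (e ⟨g, hg⟩).1.1 = (e ⟨h, hh⟩).1.1 :=
    (he_r _).trans <| (congrArg (fun x => (base x : Y)) (Subtype.ext hrgh)).trans (he_r _).symm
  have hsnd : (e ⟨g, hg⟩).1.2 ≠ (e ⟨h, hh⟩).1.2 := fun h₂ =>
    hne <| congrArg Subtype.val <| e.injective <| Subtype.ext <| Prod.ext hfst h₂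
  exact (isOpen_res hd hr hV).disjoint_nhds_val <|
    disjoint_nhds_of_map_ne (continuous_snd.comp (continuous_subtype_val.comp e.continuous)) hsnd

end GroupoidOn

theorem statement_7_general {X : Type u} [TopologicalSpace X] [T2Space X]
    {A : Type u} [TopologicalSpace A]
    (G : GroupoidOn X A Set.univ) (hG : IsBoundaryActionGroupoid G) :
    T2Space A := by
  obtain ⟨U, -, hU, hUdense, hUinv, hUpair⟩ := hG.orbit
  obtain ⟨ι, V, hV, -, hchart, hglue⟩ := hG.cover
  have hd := hG.top.continuous_d
  have hr := hG.top.continuous_r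
  have hsep : ∀ a ∈ G.res U, ∀ b, Inseparable a b → a = b := fun a ha _ =>
    Inseparable.eq_of_injOn (hd.prodMk hr) (GroupoidOn.isOpen_res hd hr hU)
      (GroupoidOn.injOn_res_of_areRedIso_pairGroupoid hUpair) ha
  refine t2Space_iff_disjoint_nhds.2 fun g h hne => ?_
  obtain hdr | hdr := ne_or_eq (G.d g, G.r g) (G.d h, G.r h)
  · exact disjoint_nhds_of_map_ne (hd.prodMk hr) hdr
  obtain ⟨hdgh, hrgh⟩ := Prod.mk.inj hdr
  obtain ⟨i, hg, hhinv⟩ := hglue g (G.inv h) (hdgh.trans (G.r_inv h).symm)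
  have hh : h ∈ G.res (V i) := ⟨G.r_inv h ▸ hhinv.2, G.d_inv h ▸ hhinv.1⟩
  obtain ⟨Y, tY, Γ, gΓ, tΓ, hΓ, ρ, W, hW, hiso⟩ := hchart i
  obtain ⟨a, ha, haU⟩ := (GroupoidOn.dense_res hG.top hUdense hUinv).inter_open_nonempty _
    (GroupoidOn.isOpen_res hd hr (hV i)) ⟨g, hg⟩
  have := GroupoidOn.t0Space_of_areRedIso_actionGroupoid ρ hW hiso ha (hsep a haU)
  exact GroupoidOn.disjoint_nhds_of_areRedIso_actionGroupoid hd hr (hV i) ρ hiso hg hh hrgh hne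

/-- Every boundary action groupoid is Hausdorff: its space of
morphisms is a Hausdorff topological space. -/
theorem statement_7 {X : Type u} [TopologicalSpace X] [T2Space X]
    [LocallyCompactSpace X] {A : Type u} [TopologicalSpace A]
    (G : GroupoidOn X A Set.univ) (hG : IsBoundaryActionGroupoid G) :
    T2Space A :=
  statement_7_general G hG
end

section
/- If 𝒢 ⇉ M and ℋ ⇉ N are boundary action groupoids, then the product groupoid 𝒢 × ℋ ⇉ M × N is a boundary action groupoid; its unique open dense orbit is U × V, where U and V are the open dense orbits of 𝒢 and ℋ respectively. -/
/-!
We model a (locally compact / Lie) groupoid `𝒢 ⇉ U` over a set of units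
`U ⊆ X` by a type `A` of arrows together with (total) structural maps;
multiplication is a total function whose value is only relevant on composable
pairs.  Smoothness is modelled at the topological level.
-/

universe u v

/-- The product of two groupoids, with componentwise structural maps. -/
def GroupoidOn.prodG {X : Type u} {A : Type v} {SX : Set X}
    {Y : Type u'} {B : Type v'} {SY : Set Y}
    (G : GroupoidOn X A SX) (H : GroupoidOn Y B SY) :
    GroupoidOn (X × Y) (A × B) (SX ×ˢ SY) where
  d p := (G.d p.1, H.d p.2)
  r p := (G.r p.1, H.r p.2)
  unit x := (G.unit ⟨x.1.1, x.2.1⟩, H.unit ⟨x.1.2, x.2.2⟩)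
  inv p := (G.inv p.1, H.inv p.2)
  mul p q := (G.mul p.1 q.1, H.mul p.2 q.2)
  d_mem p := ⟨G.d_mem p.1, H.d_mem p.2⟩
  r_mem p := ⟨G.r_mem p.1, H.r_mem p.2⟩
  d_unit x := Prod.ext (G.d_unit _) (H.d_unit _)
  r_unit x := Prod.ext (G.r_unit _) (H.r_unit _)
  d_inv p := Prod.ext (G.d_inv p.1) (H.d_inv p.2)
  r_inv p := Prod.ext (G.r_inv p.1) (H.r_inv p.2)
  d_mul p q h := Prod.ext (G.d_mul _ _ (congrArg Prod.fst h)) (H.d_mul _ _ (congrArg Prod.snd h))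
  r_mul p q h := Prod.ext (G.r_mul _ _ (congrArg Prod.fst h)) (H.r_mul _ _ (congrArg Prod.snd h))
  mul_assoc' p q k h1 h2 :=
    Prod.ext (G.mul_assoc' _ _ _ (congrArg Prod.fst h1) (congrArg Prod.fst h2))
      (H.mul_assoc' _ _ _ (congrArg Prod.snd h1) (congrArg Prod.snd h2))
  unit_mul g := Prod.ext (G.unit_mul g.1) (H.unit_mul g.2)
  mul_unit g := Prod.ext (G.mul_unit g.1) (H.mul_unit g.2)
  mul_inv g := Prod.ext (G.mul_inv g.1) (H.mul_inv g.2)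
  inv_mul g := Prod.ext (G.inv_mul g.1) (H.inv_mul g.2)

/-!
Everything is componentwise. Products of reduction isomorphisms are reduction isomorphisms, the
product of two pair groupoids is the pair groupoid of the product, and the product of two action
groupoids is the action groupoid of the product action; a composable pair in `𝒢 × ℋ` is composable
in each factor, which gives the weak gluing condition for the product cover. The dense orbit is
unique: if `U` and `U'` are both open dense orbits, a point `y ∈ U` is joined by an arrow to some
`x ∈ U ∩ U'`, and invariance of `U'` forces `y ∈ U'`.
-/

theorem GroupoidOn.res_prodG {X A Y B : Type*} {S : Set X} {T : Set Y} (G : GroupoidOn X A S)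
    (H : GroupoidOn Y B T) (V : Set X) (V' : Set Y) :
    (G.prodG H).res (V ×ˢ V') = G.res V ×ˢ H.res V' :=
  Set.ext fun _ => and_and_and_comm

section ReductionIso

variable {X A Y B X' A' Y' B' Z C : Type*}
  [TopologicalSpace X] [TopologicalSpace A] [TopologicalSpace Y] [TopologicalSpace B]
  [TopologicalSpace X'] [TopologicalSpace A'] [TopologicalSpace Y'] [TopologicalSpace B']
  [TopologicalSpace Z] [TopologicalSpace C]

theorem AreRedIso.trans {S : Set X} {T : Set Y} {R : Set Z}
    {G : GroupoidOn X A S} {H : GroupoidOn Y B T} {K : GroupoidOn Z C R}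
    {V : Set X} {W : Set Y} {Q : Set Z}
    (h₁ : AreRedIso G V H W) (h₂ : AreRedIso H W K Q) : AreRedIso G V K Q := by
  obtain ⟨b₁, e₁, hd₁, hr₁, hm₁⟩ := h₁
  obtain ⟨b₂, e₂, hd₂, hr₂, hm₂⟩ := h₂
  refine ⟨b₁.trans b₂, e₁.trans e₂, fun g => ?_, fun g => ?_, fun g h hc => ?_⟩
  · exact (hd₂ (e₁ g)).trans (congrArg (fun x => (b₂ x : Z)) (Subtype.ext (hd₁ g)))
  · exact (hr₂ (e₁ g)).trans (congrArg (fun x => (b₂ x : Z)) (Subtype.ext (hr₁ g)))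
  · have hc' : H.d (e₁ g).1 = H.r (e₁ h).1 := by
      rw [hd₁ g, hr₁ h]
      exact congrArg (fun x => (b₁ x : Y)) (Subtype.ext hc)
    exact (congrArg (fun x => (e₂ x).1) (Subtype.ext (hm₁ g h hc))).trans (hm₂ _ _ hc')

def Homeomorph.setProdCongr {s : Set X} {t : Set Y} {s' : Set X'} {t' : Set Y'}
    (e₁ : s ≃ₜ s') (e₂ : t ≃ₜ t') : ↥(s ×ˢ t) ≃ₜ ↥(s' ×ˢ t') :=
  (Homeomorph.Set.prod s t).trans ((e₁.prodCongr e₂).trans (Homeomorph.Set.prod s' t').symm)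

theorem AreRedIso.prodG {S : Set X} {T : Set Y} {S' : Set X'} {T' : Set Y'}
    {G : GroupoidOn X A S} {H : GroupoidOn Y B T}
    {G' : GroupoidOn X' A' S'} {H' : GroupoidOn Y' B' T'}
    {V : Set X} {V' : Set Y} {W : Set X'} {W' : Set Y'}
    (h₁ : AreRedIso G V G' W) (h₂ : AreRedIso H V' H' W') :
    AreRedIso (G.prodG H) (V ×ˢ V') (G'.prodG H') (W ×ˢ W') := by
  obtain ⟨b₁, e₁, hd₁, hr₁, hm₁⟩ := h₁
  obtain ⟨b₂, e₂, hd₂, hr₂, hm₂⟩ := h₂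
  refine ⟨b₁.setProdCongr b₂, (Homeomorph.setCongr (G.res_prodG H V V')).trans
      ((e₁.setProdCongr e₂).trans (Homeomorph.setCongr (G'.res_prodG H' W W')).symm),
    fun _ => Prod.ext (hd₁ _) (hd₂ _), fun _ => Prod.ext (hr₁ _) (hr₂ _),
    fun g h hc => Prod.ext
      (hm₁ ⟨g.1.1, g.2.1.1, g.2.2.1⟩ ⟨h.1.1, h.2.1.1, h.2.2.1⟩ (congrArg Prod.fst hc))
      (hm₂ ⟨g.1.2, g.2.1.2, g.2.2.2⟩ ⟨h.1.2, h.2.1.2, h.2.2.2⟩ (congrArg Prod.snd hc))⟩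

theorem pairGroupoid_prodG_areRedIso (U : Set X) (V : Set Y) :
    AreRedIso ((pairGroupoid U).prodG (pairGroupoid V)) (U ×ˢ V)
      (pairGroupoid (U ×ˢ V)) (U ×ˢ V) :=
  ⟨Homeomorph.refl _,
    ((Homeomorph.prodProdProdComm U U V V).trans
      ((Homeomorph.Set.prod U V).symm.prodCongr (Homeomorph.Set.prod U V).symm)).subtype
      fun _ => by simp [GroupoidOn.res, pairGroupoid, GroupoidOn.prodG],
    fun _ => rfl, fun _ => rfl, fun _ _ _ => rfl⟩

def ContRightAction.prod {Γ Γ' : Type*} [Group Γ] [Group Γ'] [TopologicalSpace Γ]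
    [TopologicalSpace Γ'] (ρ : ContRightAction Γ Y) (σ : ContRightAction Γ' Y') :
    ContRightAction (Γ × Γ') (Y × Y') where
  act p g := (ρ.act p.1 g.1, σ.act p.2 g.2)
  act_one p := Prod.ext (ρ.act_one p.1) (σ.act_one p.2)
  act_mul p g h := Prod.ext (ρ.act_mul p.1 g.1 h.1) (σ.act_mul p.2 g.2 h.2)
  continuous_act :=
    (ρ.continuous_act.comp (continuous_fst.fst.prodMk continuous_snd.fst)).prodMk
      (σ.continuous_act.comp (continuous_fst.snd.prodMk continuous_snd.snd))

theorem actionGroupoid_prodG_areRedIso {Γ Γ' : Type*} [Group Γ] [Group Γ']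
    [TopologicalSpace Γ] [TopologicalSpace Γ']
    (ρ : ContRightAction Γ Y) (σ : ContRightAction Γ' Y') (W : Set Y) (W' : Set Y') :
    AreRedIso ((actionGroupoid ρ).prodG (actionGroupoid σ)) (W ×ˢ W')
      (actionGroupoid (ρ.prod σ)) (W ×ˢ W') :=
  ⟨Homeomorph.refl _, (Homeomorph.prodProdProdComm Y Γ Y' Γ').subtype fun _ => Iff.rfl,
    fun _ => rfl, fun _ => rfl, fun _ _ _ => rfl⟩

end ReductionIso

section Orbits

variable {X A : Type*} [TopologicalSpace X] [TopologicalSpace A] {S : Set X}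
  {G : GroupoidOn X A S} {U U' : Set X}

theorem OrbitData.exists_arrow (hU : OrbitData G U) {x y : X} (hx : x ∈ U) (hy : y ∈ U) :
    ∃ g, G.d g = x ∧ G.r g = y := by
  obtain ⟨-, -, -, -, base, e, hd, hr, -⟩ := hU
  have base_inj : ∀ {a b : X} (ha : a ∈ U) (hb : b ∈ U),
      (base ⟨a, ha⟩ : X) = base ⟨b, hb⟩ → a = b := fun _ _ h =>
    congrArg Subtype.val (base.injective (Subtype.ext h))
  let g := e.symm ⟨(base ⟨y, hy⟩, base ⟨x, hx⟩), (base ⟨x, hx⟩).2, (base ⟨y, hy⟩).2⟩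
  refine ⟨g.1, (base_inj hx g.2.1 ?_).symm, (base_inj hy g.2.2 ?_).symm⟩
  · have h := hd g
    rwa [e.apply_symm_apply] at h
  · have h := hr g
    rwa [e.apply_symm_apply] at h

theorem OrbitData.subset (hU : OrbitData G U) (hU' : OrbitData G U') : U ⊆ U' := by
  intro y hy
  obtain ⟨x, hxU, hxU'⟩ := mem_closure_iff.mp (hU'.2.2.1 (hU.1 hy)) U hU.2.1 hy
  obtain ⟨g, rfl, rfl⟩ := hU.exists_arrow hxU hy
  exact hU'.2.2.2.1 g hxU'

theorem OrbitData.eq (hU : OrbitData G U) (hU' : OrbitData G U') : U = U' :=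
  (hU.subset hU').antisymm (hU'.subset hU)

end Orbits

section Products

variable {X A Y B : Type*} [TopologicalSpace X] [TopologicalSpace A] [TopologicalSpace Y]
  [TopologicalSpace B] {S : Set X} {T : Set Y} {G : GroupoidOn X A S} {H : GroupoidOn Y B T}

theorem IsTopGroupoid.prodG (hG : IsTopGroupoid G) (hH : IsTopGroupoid H) :
    IsTopGroupoid (G.prodG H) where
  continuous_d := hG.continuous_d.prodMap hH.continuous_d
  continuous_r := hG.continuous_r.prodMap hH.continuous_r
  continuous_unit := (hG.continuous_unit.comp (continuous_subtype_val.fst.subtype_mk _)).prodMk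
    (hH.continuous_unit.comp (continuous_subtype_val.snd.subtype_mk _))
  continuous_inv := hG.continuous_inv.prodMap hH.continuous_inv
  continuousOn_mul :=
    (hG.continuousOn_mul.comp (continuous_fst.fst.prodMk continuous_snd.fst).continuousOn
        fun _ => congrArg Prod.fst).prodMk
      (hH.continuousOn_mul.comp (continuous_fst.snd.prodMk continuous_snd.snd).continuousOn
        fun _ => congrArg Prod.snd)
  d_surj := by
    rintro ⟨x, y⟩ ⟨hx, hy⟩
    obtain ⟨a, rfl⟩ := hG.d_surj hx
    obtain ⟨b, rfl⟩ := hH.d_surj hy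
    exact ⟨(a, b), rfl⟩
  isOpenMap_d := hG.isOpenMap_d.prodMap hH.isOpenMap_d

theorem OrbitData.prodG {U : Set X} {V : Set Y} (hU : OrbitData G U) (hV : OrbitData H V) :
    OrbitData (G.prodG H) (U ×ˢ V) := by
  obtain ⟨hUS, hUo, hSU, hUi, hUiso⟩ := hU
  obtain ⟨hVT, hVo, hTV, hVi, hViso⟩ := hV
  refine ⟨Set.prod_mono hUS hVT, hUo.prod hVo, ?_, fun g hg => ⟨hUi g.1 hg.1, hVi g.2 hg.2⟩,
    (hUiso.prodG hViso).trans (pairGroupoid_prodG_areRedIso U V)⟩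
  rw [closure_prod_eq]
  exact Set.prod_mono hSU hTV

end Products

theorem IsBoundaryActionGroupoid.prodG {X A Y B : Type u} [TopologicalSpace X]
    [TopologicalSpace A] [TopologicalSpace Y] [TopologicalSpace B] {S : Set X} {T : Set Y}
    {G : GroupoidOn X A S} {H : GroupoidOn Y B T}
    (hG : IsBoundaryActionGroupoid G) (hH : IsBoundaryActionGroupoid H) :
    IsBoundaryActionGroupoid (G.prodG H) := by
  obtain ⟨U, hU⟩ := hG.orbit
  obtain ⟨V, hV⟩ := hH.orbit
  obtain ⟨ι, VG, hVG_open, hVG_cover, hVG_chart, hVG_glue⟩ := hG.cover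
  obtain ⟨κ, VH, hVH_open, hVH_cover, hVH_chart, hVH_glue⟩ := hH.cover
  refine ⟨hG.top.prodG hH.top, ⟨U ×ˢ V, hU.prodG hV⟩, ι × κ, fun i => VG i.1 ×ˢ VH i.2,
    fun i => (hVG_open i.1).prod (hVH_open i.2), ?_, ?_, ?_⟩
  · rintro ⟨x, y⟩ ⟨hx, hy⟩
    obtain ⟨i, hi⟩ := hVG_cover x hx
    obtain ⟨j, hj⟩ := hVH_cover y hy
    exact ⟨(i, j), hi, hj⟩
  · rintro ⟨i, j⟩
    obtain ⟨Y₁, _, Γ₁, _, _, _, ρ₁, W₁, hW₁, hiso₁⟩ := hVG_chart i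
    obtain ⟨Y₂, _, Γ₂, _, _, _, ρ₂, W₂, hW₂, hiso₂⟩ := hVH_chart j
    exact ⟨Y₁ × Y₂, _, Γ₁ × Γ₂, _, _, inferInstance, ρ₁.prod ρ₂, W₁ ×ˢ W₂, hW₁.prod hW₂,
      (hiso₁.prodG hiso₂).trans (actionGroupoid_prodG_areRedIso ρ₁ ρ₂ W₁ W₂)⟩
  · intro g h hc
    obtain ⟨i, hgi, hhi⟩ := hVG_glue g.1 h.1 (congrArg Prod.fst hc)
    obtain ⟨j, hgj, hhj⟩ := hVH_glue g.2 h.2 (congrArg Prod.snd hc)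
    refine ⟨(i, j), ?_, ?_⟩ <;> rw [G.res_prodG H]
    exacts [⟨hgi, hgj⟩, ⟨hhi, hhj⟩]

theorem statement_8_general {X : Type u} [TopologicalSpace X] {A : Type u} [TopologicalSpace A]
    {Y : Type u} [TopologicalSpace Y]
    {B : Type u} [TopologicalSpace B]
    (G : GroupoidOn X A Set.univ) (H : GroupoidOn Y B Set.univ)
    (hG : IsBoundaryActionGroupoid G) (hH : IsBoundaryActionGroupoid H) :
    IsBoundaryActionGroupoid (G.prodG H) ∧
    ∀ U V, OrbitData G U → OrbitData H V →
      OrbitData (G.prodG H) (U ×ˢ V) ∧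
      -- uniqueness of the open dense orbit of the product:
      ∀ W, OrbitData (G.prodG H) W → W = U ×ˢ V :=
  ⟨hG.prodG hH, fun _ _ hU hV => ⟨hU.prodG hV, fun _ hW => hW.eq (hU.prodG hV)⟩⟩

/-- If `𝒢 ⇉ M` and `ℋ ⇉ N` are boundary action groupoids,
then the product groupoid `𝒢 × ℋ ⇉ M × N` is a boundary action groupoid; its
unique open dense orbit is `U × V`, where `U` and `V` are the open dense orbits
of `𝒢` and `ℋ` respectively. -/
theorem statement_8 {X : Type u} [TopologicalSpace X] [T2Space X]
    [LocallyCompactSpace X] {A : Type u} [TopologicalSpace A]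
    {Y : Type u} [TopologicalSpace Y] [T2Space Y] [LocallyCompactSpace Y]
    {B : Type u} [TopologicalSpace B]
    (G : GroupoidOn X A Set.univ) (H : GroupoidOn Y B Set.univ)
    (hG : IsBoundaryActionGroupoid G) (hH : IsBoundaryActionGroupoid H) :
    IsBoundaryActionGroupoid (G.prodG H) ∧
    ∀ U V, OrbitData G U → OrbitData H V →
      OrbitData (G.prodG H) (U ×ˢ V) ∧
      -- uniqueness of the open dense orbit of the product:
      ∀ W, OrbitData (G.prodG H) W → W = U ×ˢ V :=
  statement_8_general G H hG hH
end
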